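/- arXiv:2507.14522 — 4 statements merged into one kernel-verified Lean document; each statement's English description precedes it below -/
import Mathlib

section
/- Let c : ℝ → ℝ and let u : ℝ × ℝ → ℝ be twice continuously differentiable on {(x,t) : x ≠ 0 and t ≠ 0} and satisfy the wave equation ∂²u/∂t²(x,t) = c(x)² · ∂²u/∂x²(x,t) for all x ≠ 0 and all t ≠ 0. Define σ : ℝ × ℝ → ℝ by σ(X,T) = X · T · u(−1/X, −1/T) for X ≠ 0, T ≠ 0. Then σ satisfies ∂²σ/∂T²(X,T) = X⁴ · T⁻⁴ · c(−1/X)² · ∂²σ/∂X²(X,T) for all X ≠ 0 and all T ≠ 0. -/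
/-!
Along each coordinate line, `σ` is a constant multiple of `s ↦ s * g (-1 / s)` for a slice `g`
of `u`, and the second derivative of this function at `s` is `g'' (-1 / s) / s ^ 3`: the
first-order terms cancel. Hence `σ_TT = X T⁻³ u_tt` and `σ_XX = T X⁻³ u_xx` at corresponding
points, and the wave equation for `u` turns into the one for `σ`.
-/

open Filter Topology

/-- First partial derivative with respect to the first argument. -/
noncomputable def pdx (u : ℝ × ℝ → ℝ) : ℝ × ℝ → ℝ :=
  fun p => deriv (fun x => u (x, p.2)) p.1

/-- First partial derivative with respect to the second argument. -/
noncomputable def pdt (u : ℝ × ℝ → ℝ) : ℝ × ℝ → ℝ :=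
  fun p => deriv (fun t => u (p.1, t)) p.2

lemma hasDerivAt_neg_one_div {t : ℝ} (ht : t ≠ 0) :
    HasDerivAt (fun s : ℝ => -1 / s) (t ^ 2)⁻¹ t := by
  simpa [neg_div, one_div, Pi.neg_def] using (hasDerivAt_inv ht).neg

lemma HasDerivAt.comp_neg_one_div {g : ℝ → ℝ} {g' t : ℝ} (hg : HasDerivAt g g' (-1 / t))
    (ht : t ≠ 0) : HasDerivAt (fun s => g (-1 / s)) (g' / t ^ 2) t := by
  simpa [div_eq_mul_inv, Function.comp_def] using hg.comp t (hasDerivAt_neg_one_div ht)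

lemma deriv_mul_comp_neg_one_div {g : ℝ → ℝ} {t : ℝ} (hg : DifferentiableAt ℝ g (-1 / t))
    (ht : t ≠ 0) :
    deriv (fun s => s * g (-1 / s)) t = g (-1 / t) + deriv g (-1 / t) / t := by
  have h : HasDerivAt (fun s => s * g (-1 / s))
      (1 * g (-1 / t) + t * (deriv g (-1 / t) / t ^ 2)) t :=
    (hasDerivAt_id' t).mul (hg.hasDerivAt.comp_neg_one_div ht)
  rw [h.deriv]
  field_simp

theorem deriv_deriv_mul_comp_neg_one_div {g : ℝ → ℝ} {t : ℝ} (hg : ContDiffAt ℝ 2 g (-1 / t))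
    (ht : t ≠ 0) :
    deriv (deriv fun s => s * g (-1 / s)) t = deriv (deriv g) (-1 / t) / t ^ 3 := by
  have hnear : ∀ᶠ s in 𝓝 t, s ≠ 0 ∧ ContDiffAt ℝ 2 g (-1 / s) :=
    (eventually_ne_nhds ht).and <|
      (hasDerivAt_neg_one_div ht).continuousAt.eventually (hg.eventually (by simp))
  have hderiv : deriv (fun s => s * g (-1 / s)) =ᶠ[𝓝 t]
      fun s => g (-1 / s) + deriv g (-1 / s) / s := by
    filter_upwards [hnear] with s ⟨hs, hgs⟩
    exact deriv_mul_comp_neg_one_div (hgs.differentiableAt (by simp)) hs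
  have hg' : DifferentiableAt ℝ (deriv g) (-1 / t) :=
    (hg.derivWithin (m := 1) (by norm_num)).differentiableAt (by simp)
  rw [hderiv.deriv_eq]
  have h : HasDerivAt (fun s => g (-1 / s) + deriv g (-1 / s) / s)
      (deriv g (-1 / t) / t ^ 2 +
        (deriv (deriv g) (-1 / t) / t ^ 2 * t - deriv g (-1 / t) * 1) / t ^ 2) t :=
    ((hg.differentiableAt (by simp)).hasDerivAt.comp_neg_one_div ht).add
      ((hg'.hasDerivAt.comp_neg_one_div ht).div (hasDerivAt_id' t) ht)
  rw [h.deriv]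
  field_simp
  ring

lemma deriv_deriv_of_eventuallyEq_const_mul_mul_comp_neg_one_div {f g : ℝ → ℝ} {a t : ℝ}
    (hf : f =ᶠ[𝓝 t] fun s => a * (s * g (-1 / s))) (hg : ContDiffAt ℝ 2 g (-1 / t))
    (ht : t ≠ 0) : deriv (deriv f) t = a * (deriv (deriv g) (-1 / t) / t ^ 3) := by
  rw [hf.deriv.deriv_eq, deriv_const_mul_field', deriv_const_mul_field']
  exact congrArg (a * ·) (deriv_deriv_mul_comp_neg_one_div hg ht)

theorem stmt_2 (c : ℝ → ℝ) (u σ : ℝ × ℝ → ℝ)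
    (hu : ContDiffOn ℝ 2 u {p : ℝ × ℝ | p.1 ≠ 0 ∧ p.2 ≠ 0})
    (hwave : ∀ x t : ℝ, x ≠ 0 → t ≠ 0 →
      pdt (pdt u) (x, t) = (c x) ^ 2 * pdx (pdx u) (x, t))
    (hσ : ∀ X T : ℝ, X ≠ 0 → T ≠ 0 → σ (X, T) = X * T * u (-1 / X, -1 / T)) :
    ∀ X T : ℝ, X ≠ 0 → T ≠ 0 →
      pdt (pdt σ) (X, T)
        = X ^ 4 * (T ^ 4)⁻¹ * (c (-1 / X)) ^ 2 * pdx (pdx σ) (X, T) := by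
  intro X T hX hT
  have hX' : -1 / X ≠ 0 := div_ne_zero (by norm_num) hX
  have hT' : -1 / T ≠ 0 := div_ne_zero (by norm_num) hT
  have hu' : ContDiffAt ℝ 2 u (-1 / X, -1 / T) :=
    hu.contDiffAt <| ((isOpen_ne_fun continuous_fst continuous_const).inter
      (isOpen_ne_fun continuous_snd continuous_const)).mem_nhds ⟨hX', hT'⟩
  have huT : ContDiffAt ℝ 2 (fun y => u (-1 / X, y)) (-1 / T) :=
    hu'.comp (-1 / T) (contDiffAt_const.prodMk contDiffAt_id)
  have huX : ContDiffAt ℝ 2 (fun y => u (y, -1 / T)) (-1 / X) :=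
    hu'.comp (-1 / X) (contDiffAt_id.prodMk contDiffAt_const)
  have hσT : pdt (pdt σ) (X, T) = X * (pdt (pdt u) (-1 / X, -1 / T) / T ^ 3) := by
    refine deriv_deriv_of_eventuallyEq_const_mul_mul_comp_neg_one_div
      (f := fun s => σ (X, s)) ?_ huT hT
    filter_upwards [eventually_ne_nhds hT] with s hs
    rw [hσ X s hX hs, mul_assoc]
  have hσX : pdx (pdx σ) (X, T) = T * (pdx (pdx u) (-1 / X, -1 / T) / X ^ 3) := by
    refine deriv_deriv_of_eventuallyEq_const_mul_mul_comp_neg_one_div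
      (f := fun s => σ (s, T)) ?_ huX hX
    filter_upwards [eventually_ne_nhds hX] with s hs
    rw [hσ s T hs hT]
    ring
  rw [hσT, hσX, hwave _ _ hX' hT']
  field_simp
end

section
/- Let c : ℝ → ℝ and let u : ℝ × ℝ → ℝ be three times continuously differentiable on {(x,t) : t > 0} and satisfy the wave equation ∂²u/∂t²(x,t) = c(x)² · ∂²u/∂x²(x,t) for all x and all t > 0. Define B : ℝ × (0,∞) → ℝ by B(x,T) = t · ∂u/∂t(x,t) − u(x,t) evaluated at t = 3 T^{1/3}. Then B satisfies ∂²B/∂T²(x,T) = T^{−4/3} · c(x)² · ∂²B/∂x²(x,T) for all x and all T > 0. -/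
/-!
Write `t = φ(T) = 3 T^{1/3}`, so that `φ' = T^{-2/3}`. In `∂_T B = ∂_T (φ u_t(x, φ) - u(x, φ))`
the first-order terms `φ' u_t` cancel, leaving `∂_T B = φ φ' u_tt = 3 T^{-1/3} u_tt`, hence
`∂²_T B = -T^{-4/3} u_tt + 3 T^{-1} u_ttt`, while `∂²_x B = φ u_txx - u_xx`. Differentiating the
wave equation in `t` and commuting partial derivatives gives `u_ttt = c² u_txx`, and with
`u_tt = c² u_xx` and `T^{-4/3} φ = 3 T^{-1}` both sides agree.
-/

open Filter Topology Set

section PartialDerivatives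

variable {f g h : ℝ × ℝ → ℝ} {p : ℝ × ℝ}

theorem DifferentiableAt.hasDerivAt_pdx (hf : DifferentiableAt ℝ f p) :
    HasDerivAt (fun x => f (x, p.2)) (pdx f p) p.1 :=
  (hf.comp p.1 (differentiableAt_id.prodMk (differentiableAt_const _))).hasDerivAt

theorem DifferentiableAt.hasDerivAt_pdt (hf : DifferentiableAt ℝ f p) :
    HasDerivAt (fun t => f (p.1, t)) (pdt f p) p.2 :=
  (hf.comp p.2 ((differentiableAt_const _).prodMk differentiableAt_id)).hasDerivAt

theorem DifferentiableAt.pdx_eq_fderiv (hf : DifferentiableAt ℝ f p) :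
    pdx f p = fderiv ℝ f p (1, 0) :=
  (hf.hasFDerivAt.comp_hasDerivAt p.1 ((hasDerivAt_id p.1).prodMk (hasDerivAt_const _ _))).deriv

theorem DifferentiableAt.pdt_eq_fderiv (hf : DifferentiableAt ℝ f p) :
    pdt f p = fderiv ℝ f p (0, 1) :=
  (hf.hasFDerivAt.comp_hasDerivAt p.2 ((hasDerivAt_const _ _).prodMk (hasDerivAt_id p.2))).deriv

theorem Filter.EventuallyEq.pdx_eq (hfg : f =ᶠ[𝓝 p] g) : pdx f p = pdx g p :=
  (hfg.comp_tendsto ((continuous_id.prodMk continuous_const).tendsto' p.1 p rfl)).deriv_eq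

theorem Filter.EventuallyEq.pdt_eq (hfg : f =ᶠ[𝓝 p] g) : pdt f p = pdt g p :=
  (hfg.comp_tendsto ((continuous_const.prodMk continuous_id).tendsto' p.2 p rfl)).deriv_eq

theorem pdx_eq_mul_pdx_sub_pdx {T s a y : ℝ}
    (hfgh : ∀ y', f (y', T) = a * g (y', s) - h (y', s))
    (hg : DifferentiableAt ℝ g (y, s)) (hh : DifferentiableAt ℝ h (y, s)) :
    pdx f (y, T) = a * pdx g (y, s) - pdx h (y, s) := by
  have hslice : (fun y' => f (y', T)) = fun y' => a * g (y', s) - h (y', s) := funext hfgh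
  exact (congrArg (deriv · y) hslice).trans
    ((hg.hasDerivAt_pdx.const_mul a).sub hh.hasDerivAt_pdx).deriv

variable {U : Set (ℝ × ℝ)} {n : WithTop ℕ∞}

theorem ContDiffOn.pdx_of_isOpen (hf : ContDiffOn ℝ (n + 1) f U) (hU : IsOpen U) :
    ContDiffOn ℝ n (pdx f) U :=
  ((hf.fderiv_of_isOpen hU le_rfl).clm_apply contDiffOn_const).congr fun q hq =>
    ((hf.contDiffAt (hU.mem_nhds hq)).differentiableAt (by simp)).pdx_eq_fderiv

theorem ContDiffOn.pdt_of_isOpen (hf : ContDiffOn ℝ (n + 1) f U) (hU : IsOpen U) :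
    ContDiffOn ℝ n (pdt f) U :=
  ((hf.fderiv_of_isOpen hU le_rfl).clm_apply contDiffOn_const).congr fun q hq =>
    ((hf.contDiffAt (hU.mem_nhds hq)).differentiableAt (by simp)).pdt_eq_fderiv

theorem ContDiffOn.pdt_pdx_comm (hf : ContDiffOn ℝ 2 f U) (hU : IsOpen U) (hp : p ∈ U) :
    pdt (pdx f) p = pdx (pdt f) p := by
  have hd : ∀ q ∈ U, DifferentiableAt ℝ f q := fun q hq =>
    (hf.contDiffAt (hU.mem_nhds hq)).differentiableAt (by norm_num)
  have hd2 : DifferentiableAt ℝ (fderiv ℝ f) p :=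
    ((hf.fderiv_of_isOpen hU (m := 1) (by norm_num)).contDiffAt (hU.mem_nhds hp)).differentiableAt
      one_ne_zero
  have hx : pdx f =ᶠ[𝓝 p] fun q => fderiv ℝ f q (1, 0) :=
    eventually_of_mem (hU.mem_nhds hp) fun q hq => (hd q hq).pdx_eq_fderiv
  have ht : pdt f =ᶠ[𝓝 p] fun q => fderiv ℝ f q (0, 1) :=
    eventually_of_mem (hU.mem_nhds hp) fun q hq => (hd q hq).pdt_eq_fderiv
  rw [hx.pdt_eq, ht.pdx_eq, (hd2.clm_apply (differentiableAt_const _)).pdt_eq_fderiv,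
    (hd2.clm_apply (differentiableAt_const _)).pdx_eq_fderiv]
  simpa [fderiv_clm_apply hd2 (differentiableAt_const _)] using
    (hf.contDiffAt (hU.mem_nhds hp)).isSymmSndFDerivAt (by simp) (0, 1) (1, 0)

theorem ContDiffOn.pdt_pdx_pdx_comm (hf : ContDiffOn ℝ 3 f U) (hU : IsOpen U) (hp : p ∈ U) :
    pdt (pdx (pdx f)) p = pdx (pdx (pdt f)) p := by
  have hf2 : ContDiffOn ℝ 2 f U := hf.of_le (by norm_num)
  have hcomm : EqOn (pdt (pdx f)) (pdx (pdt f)) U := fun q hq => hf2.pdt_pdx_comm hU hq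
  rw [(hf.pdx_of_isOpen (n := 2) hU).pdt_pdx_comm hU hp,
    (hcomm.eventuallyEq_of_mem (hU.mem_nhds hp)).pdx_eq]

end PartialDerivatives

section TimeChange

variable {f : ℝ × ℝ → ℝ} {φ : ℝ → ℝ} {x T φ' : ℝ}

theorem DifferentiableAt.hasDerivAt_comp_time (hf : DifferentiableAt ℝ f (x, φ T))
    (hφ : HasDerivAt φ φ' T) :
    HasDerivAt (fun τ => f (x, φ τ)) (pdt f (x, φ T) * φ') T :=
  hf.hasDerivAt_pdt.comp T hφ

theorem hasDerivAt_mul_pdt_sub_comp_time (hf : DifferentiableAt ℝ f (x, φ T))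
    (hft : DifferentiableAt ℝ (pdt f) (x, φ T)) (hφ : HasDerivAt φ φ' T) :
    HasDerivAt (fun τ => φ τ * pdt f (x, φ τ) - f (x, φ τ))
      (φ T * φ' * pdt (pdt f) (x, φ T)) T := by
  refine ((hφ.fun_mul (hft.hasDerivAt_comp_time hφ)).fun_sub
    (hf.hasDerivAt_comp_time hφ)).congr_deriv ?_
  ring

end TimeChange

section WaveEquation

variable {u B : ℝ × ℝ → ℝ} {x T : ℝ}

theorem isOpen_setOf_snd_pos : IsOpen {p : ℝ × ℝ | 0 < p.2} :=
  isOpen_lt continuous_const continuous_snd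

theorem ContDiffOn.differentiableAt_of_snd_pos {n : WithTop ℕ∞} {f : ℝ × ℝ → ℝ}
    (hf : ContDiffOn ℝ n f {p : ℝ × ℝ | 0 < p.2}) (hn : n ≠ 0) {p : ℝ × ℝ} (hp : 0 < p.2) :
    DifferentiableAt ℝ f p :=
  (hf.differentiableOn hn).differentiableAt (isOpen_setOf_snd_pos.mem_nhds hp)

theorem hasDerivAt_three_mul_rpow_one_third (hT : 0 < T) :
    HasDerivAt (fun τ => 3 * τ ^ ((1 : ℝ) / 3)) (T ^ (-(2 : ℝ) / 3)) T := by
  refine ((Real.hasDerivAt_rpow_const (Or.inl hT.ne')).const_mul 3).congr_deriv ?_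
  rw [show (1 : ℝ) / 3 - 1 = -(2 : ℝ) / 3 by norm_num]
  ring

theorem pdt_eq_of_eq_mul_pdt_sub (hu : ContDiffOn ℝ 2 u {p : ℝ × ℝ | 0 < p.2})
    (hB : ∀ x T : ℝ, 0 < T →
      B (x, T) = 3 * T ^ ((1 : ℝ) / 3) * pdt u (x, 3 * T ^ ((1 : ℝ) / 3))
          - u (x, 3 * T ^ ((1 : ℝ) / 3)))
    (hT : 0 < T) :
    pdt B (x, T) = 3 * T ^ (-(1 : ℝ) / 3) * pdt (pdt u) (x, 3 * T ^ ((1 : ℝ) / 3)) := by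
  have hs : (0 : ℝ) < 3 * T ^ ((1 : ℝ) / 3) := by positivity
  have hBslice : (fun τ => B (x, τ)) =ᶠ[𝓝 T] fun τ =>
      3 * τ ^ ((1 : ℝ) / 3) * pdt u (x, 3 * τ ^ ((1 : ℝ) / 3)) - u (x, 3 * τ ^ ((1 : ℝ) / 3)) :=
    (eventually_gt_nhds hT).mono fun τ hτ => hB x τ hτ
  have hderiv := hasDerivAt_mul_pdt_sub_comp_time (x := x) (φ := fun τ => 3 * τ ^ ((1 : ℝ) / 3))
    (hu.differentiableAt_of_snd_pos two_ne_zero hs)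
    ((hu.pdt_of_isOpen (n := 1) isOpen_setOf_snd_pos).differentiableAt_of_snd_pos one_ne_zero hs)
    (hasDerivAt_three_mul_rpow_one_third hT)
  rw [pdt, hBslice.deriv_eq, hderiv.deriv, mul_assoc 3, ← Real.rpow_add hT]
  norm_num

theorem pdt_pdt_eq_of_eq_mul_pdt_sub (hu : ContDiffOn ℝ 3 u {p : ℝ × ℝ | 0 < p.2})
    (hB : ∀ x T : ℝ, 0 < T →
      B (x, T) = 3 * T ^ ((1 : ℝ) / 3) * pdt u (x, 3 * T ^ ((1 : ℝ) / 3))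
          - u (x, 3 * T ^ ((1 : ℝ) / 3)))
    (hT : 0 < T) :
    pdt (pdt B) (x, T) = -T ^ (-(4 : ℝ) / 3) * pdt (pdt u) (x, 3 * T ^ ((1 : ℝ) / 3))
      + 3 * T⁻¹ * pdt (pdt (pdt u)) (x, 3 * T ^ ((1 : ℝ) / 3)) := by
  have hs : (0 : ℝ) < 3 * T ^ ((1 : ℝ) / 3) := by positivity
  have hBt : (fun τ => pdt B (x, τ)) =ᶠ[𝓝 T] fun τ =>
      3 * τ ^ (-(1 : ℝ) / 3) * pdt (pdt u) (x, 3 * τ ^ ((1 : ℝ) / 3)) :=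
    (eventually_gt_nhds hT).mono fun τ hτ =>
      pdt_eq_of_eq_mul_pdt_sub (hu.of_le (by norm_num)) hB hτ
  have hcoeff : HasDerivAt (fun τ => 3 * τ ^ (-(1 : ℝ) / 3)) (-T ^ (-(4 : ℝ) / 3)) T := by
    refine ((Real.hasDerivAt_rpow_const (Or.inl hT.ne')).const_mul 3).congr_deriv ?_
    rw [show -(1 : ℝ) / 3 - 1 = -(4 : ℝ) / 3 by norm_num]
    ring
  have hutt : DifferentiableAt ℝ (pdt (pdt u)) (x, 3 * T ^ ((1 : ℝ) / 3)) :=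
    (((hu.pdt_of_isOpen (n := 2) isOpen_setOf_snd_pos).pdt_of_isOpen (n := 1)
      isOpen_setOf_snd_pos).differentiableAt_of_snd_pos one_ne_zero hs)
  have hderiv := hcoeff.fun_mul
    (hutt.hasDerivAt_comp_time (φ := fun τ => 3 * τ ^ ((1 : ℝ) / 3))
      (hasDerivAt_three_mul_rpow_one_third hT))
  have hT' : T ^ (-(1 : ℝ) / 3) * T ^ (-(2 : ℝ) / 3) = T⁻¹ := by
    rw [← Real.rpow_add hT, ← Real.rpow_neg_one]
    norm_num
  rw [pdt, hBt.deriv_eq, hderiv.deriv, ← hT']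
  ring

theorem pdx_pdx_eq_of_eq_mul_pdt_sub (hu : ContDiffOn ℝ 3 u {p : ℝ × ℝ | 0 < p.2})
    (hB : ∀ x T : ℝ, 0 < T →
      B (x, T) = 3 * T ^ ((1 : ℝ) / 3) * pdt u (x, 3 * T ^ ((1 : ℝ) / 3))
          - u (x, 3 * T ^ ((1 : ℝ) / 3)))
    (hT : 0 < T) :
    pdx (pdx B) (x, T) = 3 * T ^ ((1 : ℝ) / 3) * pdx (pdx (pdt u)) (x, 3 * T ^ ((1 : ℝ) / 3))
      - pdx (pdx u) (x, 3 * T ^ ((1 : ℝ) / 3)) := by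
  have hs : (0 : ℝ) < 3 * T ^ ((1 : ℝ) / 3) := by positivity
  have hU := isOpen_setOf_snd_pos
  have hBx : ∀ y, pdx B (y, T) = 3 * T ^ ((1 : ℝ) / 3) * pdx (pdt u) (y, 3 * T ^ ((1 : ℝ) / 3))
      - pdx u (y, 3 * T ^ ((1 : ℝ) / 3)) := fun y =>
    pdx_eq_mul_pdx_sub_pdx (hB · T hT)
      ((hu.pdt_of_isOpen (n := 2) hU).differentiableAt_of_snd_pos two_ne_zero hs)
      (hu.differentiableAt_of_snd_pos three_ne_zero hs)
  exact pdx_eq_mul_pdx_sub_pdx hBx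
    (((hu.pdt_of_isOpen (n := 2) hU).pdx_of_isOpen (n := 1) hU).differentiableAt_of_snd_pos
      one_ne_zero hs)
    ((hu.pdx_of_isOpen (n := 2) hU).differentiableAt_of_snd_pos two_ne_zero hs)

theorem pdt_pdt_pdt_eq_of_wave {c : ℝ → ℝ} (hu : ContDiffOn ℝ 3 u {p : ℝ × ℝ | 0 < p.2})
    (hwave : ∀ x t : ℝ, 0 < t → pdt (pdt u) (x, t) = (c x) ^ 2 * pdx (pdx u) (x, t))
    {t : ℝ} (ht : 0 < t) :
    pdt (pdt (pdt u)) (x, t) = c x ^ 2 * pdx (pdx (pdt u)) (x, t) := by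
  have hU := isOpen_setOf_snd_pos
  have hwave' : pdt (pdt u) =ᶠ[𝓝 (x, t)] fun q => c q.1 ^ 2 * pdx (pdx u) q :=
    eventually_of_mem (hU.mem_nhds ht) fun q hq => hwave q.1 q.2 hq
  have huxx : DifferentiableAt ℝ (pdx (pdx u)) (x, t) :=
    ((hu.pdx_of_isOpen (n := 2) hU).pdx_of_isOpen (n := 1) hU).differentiableAt_of_snd_pos
      one_ne_zero ht
  rw [hwave'.pdt_eq, pdt, (huxx.hasDerivAt_pdt.const_mul (c x ^ 2)).deriv,
    hu.pdt_pdx_pdx_comm hU ht]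

end WaveEquation

theorem stmt_10 (c : ℝ → ℝ) (u B : ℝ × ℝ → ℝ)
    (hu : ContDiffOn ℝ 3 u {p : ℝ × ℝ | 0 < p.2})
    (hwave : ∀ x t : ℝ, 0 < t →
      pdt (pdt u) (x, t) = (c x) ^ 2 * pdx (pdx u) (x, t))
    (hB : ∀ x T : ℝ, 0 < T →
      B (x, T) = 3 * T ^ ((1 : ℝ) / 3) * pdt u (x, 3 * T ^ ((1 : ℝ) / 3))
          - u (x, 3 * T ^ ((1 : ℝ) / 3))) :
    ∀ x T : ℝ, 0 < T →
      pdt (pdt B) (x, T)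
        = T ^ (-(4 : ℝ) / 3) * (c x) ^ 2 * pdx (pdx B) (x, T) := by
  intro x T hT
  have hs : (0 : ℝ) < 3 * T ^ ((1 : ℝ) / 3) := by positivity
  have hT' : T ^ (-(4 : ℝ) / 3) * T ^ ((1 : ℝ) / 3) = T⁻¹ := by
    rw [← Real.rpow_add hT, ← Real.rpow_neg_one]
    norm_num
  rw [pdt_pdt_eq_of_eq_mul_pdt_sub hu hB hT, pdx_pdx_eq_of_eq_mul_pdt_sub hu hB hT,
    pdt_pdt_pdt_eq_of_wave hu hwave hs, hwave x _ hs, ← hT']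
  ring
end

section
/- Let ρ ≠ 0 and let V : ℝ × ℝ → ℝ be twice continuously differentiable and satisfy ∂²V/∂ξ∂η(ξ,η) = 0 for all (ξ,η). For (x,t) ∈ ℝ² define ξ(x,t) = ρ·arctan(x/ρ) − ρ·arctan(t/ρ), η(x,t) = ρ·arctan(x/ρ) + ρ·arctan(t/ρ), and u(x,t) = ((x²+ρ²)(t²+ρ²))^{1/2} · V(ξ(x,t), η(x,t)). Then u satisfies the wave equation ∂²u/∂t²(x,t) = ((x²+ρ²)/(t²+ρ²))² · ∂²u/∂x²(x,t) for all (x,t) ∈ ℝ². -/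
/-!
Along a line `θ ↦ p + θ • v`, a function of the form `s ↦ √(s² + ρ²) · W(ρ arctan(s/ρ))` has
second derivative `ρ² / √(s² + ρ²)³ · (W + ρ² W'')`: the first-order terms cancel. Hence both
second derivatives of `u` are, up to the factors `√(x² + ρ²)` and `√(t² + ρ²)`, expressions in
`V` and its second derivative along `(-1, 1)` (for `t`) resp. `(1, 1)` (for `x`). These two
second derivatives differ by four times the mixed partial `V_ξη`, which vanishes.
-/

open Real

lemma hasDerivAt_mul_arctan_div (ρ s : ℝ) :
    HasDerivAt (fun s => ρ * arctan (s / ρ)) (ρ ^ 2 / (s ^ 2 + ρ ^ 2)) s := by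
  refine (((hasDerivAt_arctan (s / ρ)).comp s ((hasDerivAt_id s).div_const ρ)).const_mul
    ρ).congr_deriv ?_
  rcases eq_or_ne ρ 0 with rfl | hρ
  · simp
  · field_simp
    ring

lemma hasDerivAt_sqrt_sq_add_sq {ρ : ℝ} (hρ : ρ ≠ 0) (s : ℝ) :
    HasDerivAt (fun s => √(s ^ 2 + ρ ^ 2)) (s / √(s ^ 2 + ρ ^ 2)) s := by
  have hpos : 0 < s ^ 2 + ρ ^ 2 := by positivity
  refine (((hasDerivAt_pow 2 s).add_const (ρ ^ 2)).sqrt hpos.ne').congr_deriv ?_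
  have : √(s ^ 2 + ρ ^ 2) ≠ 0 := (sqrt_pos.mpr hpos).ne'
  field_simp
  ring

lemma deriv_deriv_sqrt_mul_comp_arctan {ρ : ℝ} (hρ : ρ ≠ 0) {W W' W'' : ℝ → ℝ}
    (hW : ∀ θ, HasDerivAt W (W' θ) θ) (hW' : ∀ θ, HasDerivAt W' (W'' θ) θ) (s : ℝ) :
    deriv (deriv fun s => √(s ^ 2 + ρ ^ 2) * W (ρ * arctan (s / ρ))) s =
      ρ ^ 2 / √(s ^ 2 + ρ ^ 2) ^ 3 *
        (W (ρ * arctan (s / ρ)) + ρ ^ 2 * W'' (ρ * arctan (s / ρ))) := by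
  set A : ℝ → ℝ := fun s => ρ * arctan (s / ρ)
  set a : ℝ → ℝ := fun s => √(s ^ 2 + ρ ^ 2)
  have ha_sq : ∀ s, a s ^ 2 = s ^ 2 + ρ ^ 2 := fun s => sq_sqrt (by positivity)
  have ha_ne : ∀ s, a s ≠ 0 := fun s => (sqrt_pos.mpr (by positivity)).ne'
  have ha : ∀ s, HasDerivAt a (s / a s) s := hasDerivAt_sqrt_sq_add_sq hρ
  have hA : ∀ s, HasDerivAt A (ρ ^ 2 / a s ^ 2) s := fun s => by
    simpa only [ha_sq] using hasDerivAt_mul_arctan_div ρ s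
  have hWA : ∀ s, HasDerivAt (fun s => W (A s)) (W' (A s) * (ρ ^ 2 / a s ^ 2)) s :=
    fun s => (hW (A s)).comp s (hA s)
  have hW'A : ∀ s, HasDerivAt (fun s => W' (A s)) (W'' (A s) * (ρ ^ 2 / a s ^ 2)) s :=
    fun s => (hW' (A s)).comp s (hA s)
  have hfirst : deriv (fun s => a s * W (A s)) =
      fun s => (s * W (A s) + ρ ^ 2 * W' (A s)) / a s := by
    funext s
    refine ((ha s).mul (hWA s)).deriv.trans ?_
    field_simp [ha_ne s]
  rw [hfirst]
  have hnum : HasDerivAt (fun s => s * W (A s) + ρ ^ 2 * W' (A s))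
      (W (A s) + s * (W' (A s) * (ρ ^ 2 / a s ^ 2)) + ρ ^ 2 * (W'' (A s) * (ρ ^ 2 / a s ^ 2))) s :=
    (((hasDerivAt_id' s).mul (hWA s)).add ((hW'A s).const_mul (ρ ^ 2))).congr_deriv (by ring)
  refine (hnum.div (ha s) (ha_ne s)).deriv.trans ?_
  show _ = ρ ^ 2 / a s ^ 3 * (W (A s) + ρ ^ 2 * W'' (A s))
  field_simp [ha_ne s]
  linear_combination W (A s) * ha_sq s

section Line

variable {E F : Type*} [NormedAddCommGroup E] [NormedSpace ℝ E]
  [NormedAddCommGroup F] [NormedSpace ℝ F]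

lemma hasDerivAt_comp_add_smul {f : E → F} {p v : E} {θ : ℝ}
    (hf : DifferentiableAt ℝ f (p + θ • v)) :
    HasDerivAt (fun s : ℝ => f (p + s • v)) (fderiv ℝ f (p + θ • v) v) θ := by
  simpa [Function.comp_def] using
    hf.hasFDerivAt.comp_hasDerivAt θ (((hasDerivAt_id θ).smul_const v).const_add p)

lemma hasDerivAt_fderiv_apply_comp_add_smul {V : E → F} {p v : E} {θ : ℝ}
    (hV : DifferentiableAt ℝ (fderiv ℝ V) (p + θ • v)) :
    HasDerivAt (fun s : ℝ => fderiv ℝ V (p + s • v) v)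
      (fderiv ℝ (fderiv ℝ V) (p + θ • v) v v) θ := by
  simpa using (hasDerivAt_comp_add_smul hV).clm_apply (hasDerivAt_const θ v)

lemma deriv_deriv_sqrt_mul_comp_line {ρ : ℝ} (hρ : ρ ≠ 0) {V : E → ℝ} (hV : ContDiff ℝ 2 V) (p v : E) (s : ℝ) :
    deriv (deriv fun s => √(s ^ 2 + ρ ^ 2) * V (p + (ρ * arctan (s / ρ)) • v)) s =
      ρ ^ 2 / √(s ^ 2 + ρ ^ 2) ^ 3 *
        (V (p + (ρ * arctan (s / ρ)) • v) +
          ρ ^ 2 * fderiv ℝ (fderiv ℝ V) (p + (ρ * arctan (s / ρ)) • v) v v) :=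
  deriv_deriv_sqrt_mul_comp_arctan hρ
    (fun _ => hasDerivAt_comp_add_smul (hV.differentiable (by norm_num) _))
    (fun _ => hasDerivAt_fderiv_apply_comp_add_smul
      ((hV.fderiv_right (m := 1) (by norm_num)).differentiable one_ne_zero _)) s

end Line

lemma pdx_eq_fderiv_apply {f : ℝ × ℝ → ℝ} {p : ℝ × ℝ} (hf : DifferentiableAt ℝ f p) :
    pdx f p = fderiv ℝ f p (1, 0) := by
  have hline : HasDerivAt (fun x : ℝ => (x, p.2)) ((1 : ℝ), (0 : ℝ)) p.1 :=
    (hasDerivAt_id p.1).prodMk (hasDerivAt_const p.1 p.2)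
  exact (hf.hasFDerivAt.comp_hasDerivAt p.1 hline).deriv

lemma pdt_eq_fderiv_apply {f : ℝ × ℝ → ℝ} {p : ℝ × ℝ} (hf : DifferentiableAt ℝ f p) :
    pdt f p = fderiv ℝ f p (0, 1) := by
  have hline : HasDerivAt (fun t : ℝ => (p.1, t)) ((0 : ℝ), (1 : ℝ)) p.2 :=
    (hasDerivAt_const p.2 p.1).prodMk (hasDerivAt_id p.2)
  exact (hf.hasFDerivAt.comp_hasDerivAt p.2 hline).deriv

lemma pdt_pdx_eq_fderiv_fderiv {V : ℝ × ℝ → ℝ} (hV : ContDiff ℝ 2 V) (q : ℝ × ℝ) :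
    pdt (pdx V) q = fderiv ℝ (fderiv ℝ V) q (0, 1) (1, 0) := by
  have hV' : Differentiable ℝ (fderiv ℝ V) :=
    (hV.fderiv_right (m := 1) (by norm_num)).differentiable one_ne_zero
  have hpdx : pdx V = fun q => fderiv ℝ V q (1, 0) :=
    funext fun q => pdx_eq_fderiv_apply (hV.differentiable (by norm_num) q)
  rw [hpdx, pdt_eq_fderiv_apply ((hV' q).clm_apply (differentiableAt_const _)),
    fderiv_clm_apply (hV' q) (differentiableAt_const _)]
  simp

lemma fderiv_fderiv_diag_eq_of_pdt_pdx_eq_zero {V : ℝ × ℝ → ℝ} (hV : ContDiff ℝ 2 V)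
    {q : ℝ × ℝ} (hq : pdt (pdx V) q = 0) :
    fderiv ℝ (fderiv ℝ V) q (1, 1) (1, 1) = fderiv ℝ (fderiv ℝ V) q (-1, 1) (-1, 1) := by
  have hsymm := (hV.contDiffAt (x := q)).isSymmSndFDerivAt (by simp) (1, 0) (0, 1)
  rw [pdt_pdx_eq_fderiv_fderiv hV] at hq
  have h₁ : ((1 : ℝ), (1 : ℝ)) = (1, 0) + (0, 1) := by simp
  have h₂ : ((-1 : ℝ), (1 : ℝ)) = -(1, 0) + (0, 1) := by simp
  rw [h₁, h₂]
  simp only [map_add, map_neg, add_apply, neg_apply]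
  linear_combination 2 * hsymm + 4 * hq

lemma sqrt_mul_div_sqrt_pow_three_comm {X T : ℝ} (hX : 0 < X) (hT : 0 < T) (r M : ℝ) :
    √X * (r / √T ^ 3 * M) = (X / T) ^ 2 * (√T * (r / √X ^ 3 * M)) := by
  have hX₀ : √X ≠ 0 := (sqrt_pos.mpr hX).ne'
  have hT₀ : √T ≠ 0 := (sqrt_pos.mpr hT).ne'
  rw [← sq_sqrt hX.le, ← sq_sqrt hT.le, sqrt_sq (sqrt_nonneg X), sqrt_sq (sqrt_nonneg T)]
  field_simp

theorem stmt_13 (ρ : ℝ) (hρ : ρ ≠ 0) (V u : ℝ × ℝ → ℝ) (hV : ContDiff ℝ 2 V)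
    (hVwave : ∀ ξ η : ℝ, pdt (pdx V) (ξ, η) = 0)
    (hu : ∀ x t : ℝ,
      u (x, t) = Real.sqrt ((x ^ 2 + ρ ^ 2) * (t ^ 2 + ρ ^ 2)) *
        V (ρ * Real.arctan (x / ρ) - ρ * Real.arctan (t / ρ),
           ρ * Real.arctan (x / ρ) + ρ * Real.arctan (t / ρ))) :
    ∀ x t : ℝ,
      pdt (pdt u) (x, t)
        = ((x ^ 2 + ρ ^ 2) / (t ^ 2 + ρ ^ 2)) ^ 2 * pdx (pdx u) (x, t) := by
  intro x t
  have hslice_t : (fun τ => u (x, τ)) = fun τ => √(x ^ 2 + ρ ^ 2) *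
      (√(τ ^ 2 + ρ ^ 2) * V ((ρ * arctan (x / ρ), ρ * arctan (x / ρ)) +
        (ρ * arctan (τ / ρ)) • (-1, 1))) := by
    funext τ
    rw [hu, sqrt_mul (by positivity), mul_assoc]
    congr 3
    ext <;> simp; ring
  have hslice_x : (fun y => u (y, t)) = fun y => √(t ^ 2 + ρ ^ 2) *
      (√(y ^ 2 + ρ ^ 2) * V ((-(ρ * arctan (t / ρ)), ρ * arctan (t / ρ)) +
        (ρ * arctan (y / ρ)) • (1, 1))) := by
    funext y
    rw [hu, sqrt_mul' _ (by positivity), mul_comm √(y ^ 2 + ρ ^ 2), mul_assoc]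
    congr 3
    ext <;> simp <;> ring
  have hpoint : ((ρ * arctan (x / ρ), ρ * arctan (x / ρ)) + (ρ * arctan (t / ρ)) • (-1, 1) :
      ℝ × ℝ) = (-(ρ * arctan (t / ρ)), ρ * arctan (t / ρ)) + (ρ * arctan (x / ρ)) • (1, 1) := by
    ext <;> simp <;> ring
  have htt : pdt (pdt u) (x, t) = deriv (deriv fun τ => u (x, τ)) t := rfl
  have hxx : pdx (pdx u) (x, t) = deriv (deriv fun y => u (y, t)) x := rfl
  simp only [htt, hxx, hslice_t, hslice_x, deriv_const_mul_field']
  rw [deriv_deriv_sqrt_mul_comp_line hρ hV, deriv_deriv_sqrt_mul_comp_line hρ hV, hpoint,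
    fderiv_fderiv_diag_eq_of_pdt_pdx_eq_zero hV (hVwave _ _)]
  exact sqrt_mul_div_sqrt_pow_three_comm (by positivity) (by positivity) _ _
end

section
/- Let F, G : ℝ → ℝ be three times continuously differentiable. For x ≠ 0 and T > 0 define B(x,T) = x · ( F(1/x + 3 T^{1/3}) + G(1/x − 3 T^{1/3}) + 3 T^{1/3} · ( G'(1/x − 3 T^{1/3}) − F'(1/x + 3 T^{1/3}) ) ). Then B satisfies the wave equation ∂²B/∂T²(x,T) = T^{−4/3} · x⁴ · ∂²B/∂x²(x,T) for all x ≠ 0 and all T > 0. -/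
open Filter Topology

lemma pdt_pdt_apply (u : ℝ × ℝ → ℝ) (x t : ℝ) :
    pdt (pdt u) (x, t) = deriv (deriv fun t => u (x, t)) t :=
  rfl

lemma pdx_pdx_apply (u : ℝ × ℝ → ℝ) (x t : ℝ) :
    pdx (pdx u) (x, t) = deriv (deriv fun x => u (x, t)) x :=
  rfl

lemma deriv_deriv_mul_comp_inv {u : ℝ → ℝ} (hu : Differentiable ℝ u) {x : ℝ} (hx : x ≠ 0)
    (hu' : DifferentiableAt ℝ (deriv u) x⁻¹) :
    deriv (deriv fun y => y * u y⁻¹) x = deriv (deriv u) x⁻¹ / x ^ 3 := by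
  have hderiv : ∀ y ≠ 0, deriv (fun y => y * u y⁻¹) y = u y⁻¹ - y⁻¹ * deriv u y⁻¹ := by
    intro y hy
    have h : HasDerivAt (fun y => y * u y⁻¹) _ y :=
      (hasDerivAt_id y).mul ((hu y⁻¹).hasDerivAt.comp y (hasDerivAt_inv hy))
    rw [h.deriv, id_eq]
    field_simp
    ring
  have hnear : deriv (fun y => y * u y⁻¹) =ᶠ[𝓝 x] fun y => u y⁻¹ - y⁻¹ * deriv u y⁻¹ :=
    eventually_ne_nhds hx |>.mono hderiv
  have hinv := hasDerivAt_inv hx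
  have h : HasDerivAt (fun y => u y⁻¹ - y⁻¹ * deriv u y⁻¹) _ x :=
    ((hu x⁻¹).hasDerivAt.comp x hinv).sub (hinv.mul (hu'.hasDerivAt.comp x hinv))
  rw [hnear.deriv_eq, h.deriv]
  field_simp
  ring

lemma hasDerivAt_three_mul_rpow_third {t : ℝ} (ht : 0 < t) :
    HasDerivAt (fun τ : ℝ => 3 * τ ^ ((1 : ℝ) / 3)) (t ^ (-(2 : ℝ) / 3)) t := by
  have h := (Real.hasDerivAt_rpow_const (p := (1 : ℝ) / 3) (Or.inl ht.ne')).const_mul 3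
  refine h.congr_deriv ?_
  rw [show (1 : ℝ) / 3 - 1 = -(2 : ℝ) / 3 by norm_num]
  ring

lemma deriv_deriv_comp_three_mul_rpow_third {g : ℝ → ℝ} (hg : Differentiable ℝ g) {T : ℝ}
    (hT : 0 < T) (hg' : DifferentiableAt ℝ (deriv g) (3 * T ^ ((1 : ℝ) / 3))) :
    deriv (deriv fun t => g (3 * t ^ ((1 : ℝ) / 3))) T =
      T ^ (-(4 : ℝ) / 3) * (deriv (deriv g) (3 * T ^ ((1 : ℝ) / 3))
        - 2 / (3 * T ^ ((1 : ℝ) / 3)) * deriv g (3 * T ^ ((1 : ℝ) / 3))) := by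
  have hderiv : ∀ t, 0 < t → deriv (fun t => g (3 * t ^ ((1 : ℝ) / 3))) t
      = deriv g (3 * t ^ ((1 : ℝ) / 3)) * t ^ (-(2 : ℝ) / 3) := fun t ht =>
    ((hg _).hasDerivAt.comp t (hasDerivAt_three_mul_rpow_third ht)).deriv
  have hnear : deriv (fun t => g (3 * t ^ ((1 : ℝ) / 3))) =ᶠ[𝓝 T]
      fun t => deriv g (3 * t ^ ((1 : ℝ) / 3)) * t ^ (-(2 : ℝ) / 3) :=
    eventually_gt_nhds hT |>.mono hderiv
  have hpow : HasDerivAt (fun t : ℝ => t ^ (-(2 : ℝ) / 3))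
      (-(2 : ℝ) / 3 * T ^ (-(5 : ℝ) / 3)) T := by
    refine (Real.hasDerivAt_rpow_const (Or.inl hT.ne')).congr_deriv ?_
    norm_num
  have hcomp := hg'.hasDerivAt.comp T (hasDerivAt_three_mul_rpow_third hT)
  have h : HasDerivAt (fun t => deriv g (3 * t ^ ((1 : ℝ) / 3)) * t ^ (-(2 : ℝ) / 3)) _ T :=
    hcomp.mul hpow
  rw [hnear.deriv_eq, h.deriv]
  have h4 : T ^ (-(2 : ℝ) / 3) * T ^ (-(2 : ℝ) / 3) = T ^ (-(4 : ℝ) / 3) := by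
    rw [← Real.rpow_add hT]; norm_num
  have h5 : T ^ (-(5 : ℝ) / 3) * T ^ ((1 : ℝ) / 3) = T ^ (-(4 : ℝ) / 3) := by
    rw [← Real.rpow_add hT]; norm_num
  have hcbrt : T ^ ((1 : ℝ) / 3) ≠ 0 := (Real.rpow_pos_of_pos hT _).ne'
  rw [Function.comp_apply, mul_assoc (deriv (deriv g) _), h4, ← h5]
  field_simp
  ring

lemma ContDiff.differentiable_deriv_deriv_three {F : ℝ → ℝ} (hF : ContDiff ℝ 3 F) :
    Differentiable ℝ (deriv (deriv F)) :=
  (show ContDiff ℝ (2 + 1) F from hF).deriv'.differentiable_deriv_two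

noncomputable def epdProfile (F G : ℝ → ℝ) (y s : ℝ) : ℝ :=
  F (y + s) + G (y - s) + s * (deriv G (y - s) - deriv F (y + s))

section epdProfile

variable {F G : ℝ → ℝ}

lemma hasDerivAt_epdProfile_fst (hF : ContDiff ℝ 2 F) (hG : ContDiff ℝ 2 G) (y s : ℝ) :
    HasDerivAt (fun y => epdProfile F G y s)
      (deriv F (y + s) + deriv G (y - s)
        + s * (deriv (deriv G) (y - s) - deriv (deriv F) (y + s))) y := by
  have hdF := ((hF.differentiable two_ne_zero) (y + s)).hasDerivAt.comp_add_const y s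
  have hdG := ((hG.differentiable two_ne_zero) (y - s)).hasDerivAt.comp_sub_const y s
  have hdF' := (hF.differentiable_deriv_two (y + s)).hasDerivAt.comp_add_const y s
  have hdG' := (hG.differentiable_deriv_two (y - s)).hasDerivAt.comp_sub_const y s
  exact (hdF.add hdG).add ((hdG'.sub hdF').const_mul s)

lemma hasDerivAt_epdProfile_snd (hF : ContDiff ℝ 2 F) (hG : ContDiff ℝ 2 G) (y s : ℝ) :
    HasDerivAt (fun s => epdProfile F G y s)
      (-(s * (deriv (deriv F) (y + s) + deriv (deriv G) (y - s)))) s := by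
  have hdF := ((hF.differentiable two_ne_zero) (y + s)).hasDerivAt.comp_const_add y s
  have hdG := ((hG.differentiable two_ne_zero) (y - s)).hasDerivAt.comp_const_sub y s
  have hdF' := (hF.differentiable_deriv_two (y + s)).hasDerivAt.comp_const_add y s
  have hdG' := (hG.differentiable_deriv_two (y - s)).hasDerivAt.comp_const_sub y s
  have h : HasDerivAt (fun s => epdProfile F G y s) _ s :=
    (hdF.add hdG).add ((hasDerivAt_id s).mul (hdG'.sub hdF'))
  refine h.congr_deriv ?_
  simp only [id_eq]
  ring

lemma hasDerivAt_deriv_epdProfile_fst (hF : ContDiff ℝ 3 F) (hG : ContDiff ℝ 3 G) (y s : ℝ) :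
    HasDerivAt (deriv fun y => epdProfile F G y s)
      (deriv (deriv F) (y + s) + deriv (deriv G) (y - s)
        + s * (deriv (deriv (deriv G)) (y - s) - deriv (deriv (deriv F)) (y + s))) y := by
  have hF₂ : ContDiff ℝ 2 F := hF.of_le (by norm_num)
  have hG₂ : ContDiff ℝ 2 G := hG.of_le (by norm_num)
  rw [funext fun y => (hasDerivAt_epdProfile_fst hF₂ hG₂ y s).deriv]
  have hdF' := (hF₂.differentiable_deriv_two (y + s)).hasDerivAt.comp_add_const y s
  have hdG' := (hG₂.differentiable_deriv_two (y - s)).hasDerivAt.comp_sub_const y s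
  have hdF'' := (hF.differentiable_deriv_deriv_three (y + s)).hasDerivAt.comp_add_const y s
  have hdG'' := (hG.differentiable_deriv_deriv_three (y - s)).hasDerivAt.comp_sub_const y s
  exact (hdF'.add hdG').add ((hdG''.sub hdF'').const_mul s)

lemma hasDerivAt_deriv_epdProfile_snd (hF : ContDiff ℝ 3 F) (hG : ContDiff ℝ 3 G) (y s : ℝ) :
    HasDerivAt (deriv fun s => epdProfile F G y s)
      (-(deriv (deriv F) (y + s) + deriv (deriv G) (y - s))
        - s * (deriv (deriv (deriv F)) (y + s) - deriv (deriv (deriv G)) (y - s))) s := by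
  rw [funext fun s => (hasDerivAt_epdProfile_snd (hF.of_le (by norm_num))
    (hG.of_le (by norm_num)) y s).deriv]
  have hdF'' := (hF.differentiable_deriv_deriv_three (y + s)).hasDerivAt.comp_const_add y s
  have hdG'' := (hG.differentiable_deriv_deriv_three (y - s)).hasDerivAt.comp_const_sub y s
  have h : HasDerivAt (fun s => -(s * (deriv (deriv F) (y + s) + deriv (deriv G) (y - s)))) _ s :=
    ((hasDerivAt_id s).mul (hdF''.add hdG'')).neg
  refine h.congr_deriv ?_
  simp only [id_eq, Pi.add_apply]
  ring

lemma epdProfile_eulerPoissonDarboux (hF : ContDiff ℝ 3 F) (hG : ContDiff ℝ 3 G) (y : ℝ)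
    {s : ℝ} (hs : s ≠ 0) :
    deriv (deriv fun s => epdProfile F G y s) s - 2 / s * deriv (fun s => epdProfile F G y s) s
      = deriv (deriv fun y => epdProfile F G y s) y := by
  rw [(hasDerivAt_deriv_epdProfile_snd hF hG y s).deriv,
    (hasDerivAt_epdProfile_snd (hF.of_le (by norm_num)) (hG.of_le (by norm_num)) y s).deriv,
    (hasDerivAt_deriv_epdProfile_fst hF hG y s).deriv]
  field_simp
  ring

end epdProfile

lemma waveEquation_of_eulerPoissonDarboux {Φ : ℝ → ℝ → ℝ} {x T : ℝ} (hx : x ≠ 0) (hT : 0 < T)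
    (hΦ₁ : Differentiable ℝ fun y => Φ y (3 * T ^ ((1 : ℝ) / 3)))
    (hΦ₁' : DifferentiableAt ℝ (deriv fun y => Φ y (3 * T ^ ((1 : ℝ) / 3))) x⁻¹)
    (hΦ₂ : Differentiable ℝ fun s => Φ x⁻¹ s)
    (hΦ₂' : DifferentiableAt ℝ (deriv fun s => Φ x⁻¹ s) (3 * T ^ ((1 : ℝ) / 3)))
    (hΦ : deriv (deriv fun s => Φ x⁻¹ s) (3 * T ^ ((1 : ℝ) / 3))
        - 2 / (3 * T ^ ((1 : ℝ) / 3)) * deriv (fun s => Φ x⁻¹ s) (3 * T ^ ((1 : ℝ) / 3))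
      = deriv (deriv fun y => Φ y (3 * T ^ ((1 : ℝ) / 3))) x⁻¹) :
    deriv (deriv fun t => x * Φ x⁻¹ (3 * t ^ ((1 : ℝ) / 3))) T
      = T ^ (-(4 : ℝ) / 3) * x ^ 4
        * deriv (deriv fun y => y * Φ y⁻¹ (3 * T ^ ((1 : ℝ) / 3))) x := by
  rw [deriv_const_mul_field', deriv_const_mul_field']
  beta_reduce
  rw [deriv_deriv_comp_three_mul_rpow_third hΦ₂ hT hΦ₂', hΦ, deriv_deriv_mul_comp_inv hΦ₁ hx hΦ₁']
  field_simp

theorem stmt_17 (F G : ℝ → ℝ) (hF : ContDiff ℝ 3 F) (hG : ContDiff ℝ 3 G)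
    (B : ℝ × ℝ → ℝ)
    (hB : ∀ x T : ℝ, x ≠ 0 → 0 < T →
      B (x, T) = x *
        (F (1 / x + 3 * T ^ ((1 : ℝ) / 3)) + G (1 / x - 3 * T ^ ((1 : ℝ) / 3))
          + 3 * T ^ ((1 : ℝ) / 3) *
            (deriv G (1 / x - 3 * T ^ ((1 : ℝ) / 3))
              - deriv F (1 / x + 3 * T ^ ((1 : ℝ) / 3))))) :
    ∀ x T : ℝ, x ≠ 0 → 0 < T →
      pdt (pdt B) (x, T)
        = T ^ (-(4 : ℝ) / 3) * x ^ 4 * pdx (pdx B) (x, T) := by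
  intro x T hx hT
  have hF₂ : ContDiff ℝ 2 F := hF.of_le (by norm_num)
  have hG₂ : ContDiff ℝ 2 G := hG.of_le (by norm_num)
  have hBt : (fun t => B (x, t)) =ᶠ[𝓝 T]
      fun t => x * epdProfile F G x⁻¹ (3 * t ^ ((1 : ℝ) / 3)) :=
    eventually_gt_nhds hT |>.mono fun t ht =>
      (hB x t hx ht).trans (by simp only [epdProfile, one_div x])
  have hBx : (fun y => B (y, T)) =ᶠ[𝓝 x]
      fun y => y * epdProfile F G y⁻¹ (3 * T ^ ((1 : ℝ) / 3)) :=
    eventually_ne_nhds hx |>.mono fun y hy =>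
      (hB y T hy hT).trans (by simp only [epdProfile, one_div y])
  rw [pdt_pdt_apply, pdx_pdx_apply, hBt.deriv.deriv_eq, hBx.deriv.deriv_eq]
  exact waveEquation_of_eulerPoissonDarboux hx hT
    (fun y => (hasDerivAt_epdProfile_fst hF₂ hG₂ y _).differentiableAt)
    (hasDerivAt_deriv_epdProfile_fst hF hG x⁻¹ _).differentiableAt
    (fun s => (hasDerivAt_epdProfile_snd hF₂ hG₂ x⁻¹ s).differentiableAt)
    (hasDerivAt_deriv_epdProfile_snd hF hG x⁻¹ _).differentiableAt
    (epdProfile_eulerPoissonDarboux hF hG x⁻¹ (by positivity))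
end
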